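/- Under symmetric pricing (ρ_{1,k}^v = ρ_{1,k} > 0 and ρ_{2,k}^v = ρ_{2,k} ≥ 0 for all v), the pseudo-gradient of the DSM game is an affine map with symmetric positive semidefinite linear part: there exist a symmetric positive semidefinite matrix H and a vector f such that F(z) = H z + f for all stacked decisions z. -/

import Mathlib

open scoped RealInnerProductSpace InnerProductSpace

/-- Index type for one prosumer's decision vector over horizon `N`:
inputs `(e_k, s_k)` for `k ∈ {0,…,N-1}` and states `(ζ_k, q_k)` for `k ∈ {0,…,N}`. -/
abbrev DecIdx (N : ℕ) : Type := (Fin N × Fin 2) ⊕ (Fin (N + 1) × Fin 2)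

/-- Stacked decision space of all `M` prosumers, with the Euclidean inner product. -/
abbrev Dec (M N : ℕ) : Type := EuclideanSpace ℝ (Fin M × DecIdx N)

/-- All data of the DSM game over horizon `N` with `M` prosumers. -/
structure DSMData (M N : ℕ) where
  α : Fin M → ℝ
  β : Fin M → ℝ
  hα : ∀ v, α v ∈ Set.Icc (0 : ℝ) 1
  hβ : ∀ v, β v ∈ Set.Icc (0 : ℝ) 1
  eref : Fin M → Fin N → ℝ
  g : Fin M → Fin N → ℝ
  LP : Fin N → ℝ
  ρ1 : Fin M → Fin N → ℝ
  ρ2 : Fin M → Fin N → ℝ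
  γ1 : Fin M → Fin N → ℝ
  γ2 : Fin M → Fin N → ℝ
  hρ1 : ∀ v k, 0 < ρ1 v k
  hρ2 : ∀ v k, 0 ≤ ρ2 v k
  hγ1 : ∀ v k, 0 < γ1 v k
  hγ2 : ∀ v k, 0 < γ2 v k
  qbar : Fin M → ℝ
  ζlo : Fin (N + 1) → ℝ
  ζhi : Fin (N + 1) → ℝ
  elo : Fin M → ℝ
  ehi : Fin M → ℝ
  slo : Fin M → ℝ
  shi : Fin M → ℝ
  lbar : Fin M → ℝ
  Llo : Fin N → ℝ
  Lhi : Fin N → ℝ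

namespace DSM

variable {M N : ℕ}

/-- Energy consumption `e_k^v`. -/
def eIn (z : Dec M N) (v : Fin M) (k : Fin N) : ℝ := z (v, Sum.inl (k, 0))

/-- Battery charging input `s_k^v`. -/
def sIn (z : Dec M N) (v : Fin M) (k : Fin N) : ℝ := z (v, Sum.inl (k, 1))

/-- Energy-shift state `ζ_k^v`. -/
def ζSt (z : Dec M N) (v : Fin M) (k : Fin (N + 1)) : ℝ := z (v, Sum.inr (k, 0))

/-- State of charge `q_k^v`. -/
def qSt (z : Dec M N) (v : Fin M) (k : Fin (N + 1)) : ℝ := z (v, Sum.inr (k, 1))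

/-- Load of prosumer `v` at time `k`: `l_k^v = e_k^v + s_k^v - g_k^v`. -/
def load (D : DSMData M N) (z : Dec M N) (v : Fin M) (k : Fin N) : ℝ :=
  eIn z v k + sIn z v k - D.g v k

/-- Aggregate load `L_k = ∑_v l_k^v + L_k^P`. -/
def Lagg (D : DSMData M N) (z : Dec M N) (k : Fin N) : ℝ :=
  (∑ v, load D z v k) + D.LP k

/-- Cost of prosumer `v`:
`J^v(z) = ∑_k (ρ1_k^v L_k + ρ2_k^v) l_k^v + γ1_k^v (ζ_k^v)² + γ2_k^v (q_k^v)²`. -/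
def J (D : DSMData M N) (v : Fin M) (z : Dec M N) : ℝ :=
  ∑ k, ((D.ρ1 v k * Lagg D z k + D.ρ2 v k) * load D z v k
    + D.γ1 v k * (ζSt z v k.castSucc) ^ 2 + D.γ2 v k * (qSt z v k.castSucc) ^ 2)

/-- Pseudo-gradient `F(z) = (∇_{z^v} J^v(z))_v`: the coordinate of `F(z)` indexed by a
component of prosumer `v`'s decision is the corresponding partial derivative of `J^v`. -/
noncomputable def F (D : DSMData M N) (z : Dec M N) : Dec M N :=
  WithLp.toLp 2 (fun i => deriv (fun t => J D i.1 (WithLp.toLp 2 (Function.update z i t))) (z i))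

/-- Joint feasible set `Z(x₀, φ)`: dynamics with fixed initial states, local state/input
box constraints, load bounds and aggregate load bounds. -/
def Feas (D : DSMData M N) (x0 : Fin M → ℝ × ℝ) : Set (Dec M N) :=
  { z | (∀ v : Fin M,
      ζSt z v 0 = (x0 v).1 ∧ qSt z v 0 = (x0 v).2 ∧
      (∀ k : Fin N,
        ζSt z v k.succ = ζSt z v k.castSucc + (eIn z v k - D.eref v k) ∧
        qSt z v k.succ = D.α v * qSt z v k.castSucc + D.β v * sIn z v k) ∧
      (∀ k : Fin (N + 1),
        0 ≤ qSt z v k ∧ qSt z v k ≤ D.qbar v ∧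
        D.ζlo k ≤ ζSt z v k ∧ ζSt z v k ≤ D.ζhi k) ∧
      (∀ k : Fin N,
        D.elo v ≤ eIn z v k ∧ eIn z v k ≤ D.ehi v ∧
        D.slo v ≤ D.β v * sIn z v k ∧ D.β v * sIn z v k ≤ D.shi v ∧
        0 ≤ load D z v k ∧ load D z v k ≤ D.lbar v)) ∧
    (∀ k : Fin N, D.Llo k ≤ Lagg D z k ∧ Lagg D z k ≤ D.Lhi k) }

/-- Symmetric pricing: the price rates `ρ1` and `ρ2` are the same for all prosumers. -/
def SymmetricPricing (D : DSMData M N) : Prop :=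
  ∀ v w : Fin M, ∀ k : Fin N, D.ρ1 v k = D.ρ1 w k ∧ D.ρ2 v k = D.ρ2 w k

end DSM

open DSM

/-! The partial derivatives of the costs are explicit: along an input of prosumer `v` at time `k`
the derivative of `J^v` is `ρ_k (l_k^v + L_k) + ρ2_k`, along a state `x` it is `2 γ x`. Hence
`F z - F 0` is `ρ_k (∑_u σ_k^u + σ_k^v)` on the inputs, where `σ_k^u = e_k^u + s_k^u`, and `2 γ x`
on the states. When `ρ_k` does not depend on `v` this is `H z` for
`H = ∑_k ρ_k (a_k a_kᵀ + ∑_v b_{kv} b_{kv}ᵀ) + 2 diag γ`, with `b_{kv}` the indicator of the inputs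
of `v` at time `k` and `a_k = ∑_v b_{kv}`: a nonnegative combination of outer products plus a
nonnegative diagonal matrix, hence symmetric positive semidefinite. -/

theorem Matrix.posSemidef_vecMulVec_self {R n : Type*} [CommRing R] [PartialOrder R] [StarRing R]
    [StarOrderedRing R] [TrivialStar R] [Fintype n] (u : n → R) :
    (vecMulVec u u).PosSemidef := by
  simpa using posSemidef_vecMulVec_self_star u

theorem hasDerivAt_update_apply {𝕜 ι : Type*} [NontriviallyNormedField 𝕜] [DecidableEq ι]
    (x : ι → 𝕜) (i j : ι) :
    HasDerivAt (fun t => Function.update x i t j) ((Pi.single j 1 : ι → 𝕜) i) (x i) := by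
  rw [Pi.single_comm]
  exact hasDerivAt_pi.1 (hasDerivAt_update x i (x i)) j

namespace DSM

open Matrix

variable {M N : ℕ}

def inputVec (v : Fin M) (k : Fin N) : Fin M × DecIdx N → ℝ :=
  Pi.single (v, Sum.inl (k, 0)) 1 + Pi.single (v, Sum.inl (k, 1)) 1

theorem inputVec_dotProduct (v : Fin M) (k : Fin N) (z : Dec M N) :
    inputVec v k ⬝ᵥ z = eIn z v k + sIn z v k := by
  simp [inputVec, add_dotProduct, single_dotProduct, eIn, sIn]

theorem inputVec_apply_inl (v w : Fin M) (k k' : Fin N) (c : Fin 2) :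
    inputVec v k (w, Sum.inl (k', c)) = if v = w ∧ k = k' then 1 else 0 := by
  fin_cases c <;> by_cases hv : v = w <;> by_cases hk : k = k' <;> simp [inputVec, hv, hk]

theorem inputVec_apply_inr (v w : Fin M) (k : Fin N) (p : Fin (N + 1) × Fin 2) :
    inputVec v k (w, Sum.inr p) = 0 := by
  simp [inputVec]

-- The terminal state `x_N` carries no cost.
def stateWeight (D : DSMData M N) : Fin M × DecIdx N → ℝ
  | (_, Sum.inl _) => 0
  | (v, Sum.inr (j, c)) => Fin.lastCases 0 (fun k => if c = 0 then D.γ1 v k else D.γ2 v k) j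

theorem stateWeight_nonneg (D : DSMData M N) (i : Fin M × DecIdx N) : 0 ≤ stateWeight D i := by
  rcases i with ⟨v, _ | ⟨j, c⟩⟩
  · exact le_rfl
  · induction j using Fin.lastCases with
    | last => simp [stateWeight]
    | cast k =>
      simp only [stateWeight, Fin.lastCases_castSucc]
      split_ifs
      exacts [(D.hγ1 v k).le, (D.hγ2 v k).le]

noncomputable def hessian (D : DSMData M N) (ρ : Fin N → ℝ) :
    Matrix (Fin M × DecIdx N) (Fin M × DecIdx N) ℝ :=
  ∑ k, ρ k • (vecMulVec (∑ v, inputVec v k) (∑ v, inputVec v k)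
      + ∑ v, vecMulVec (inputVec v k) (inputVec v k))
    + diagonal (2 • stateWeight D)

theorem hessian_posSemidef (D : DSMData M N) {ρ : Fin N → ℝ} (hρ : 0 ≤ ρ) :
    (hessian D ρ).PosSemidef :=
  (posSemidef_sum _ fun k _ => ((posSemidef_vecMulVec_self _).add
      (posSemidef_sum _ fun v _ => posSemidef_vecMulVec_self _)).smul (hρ k)).add
    (.diagonal fun i => by simpa using stateWeight_nonneg D i)

theorem hessian_mulVec_inl (D : DSMData M N) (ρ : Fin N → ℝ) (z : Dec M N) (v : Fin M)
    (k : Fin N) (c : Fin 2) :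
    (hessian D ρ *ᵥ z) (v, Sum.inl (k, c))
      = ρ k * ((∑ u, (eIn z u k + sIn z u k)) + (eIn z v k + sIn z v k)) := by
  simp [hessian, add_mulVec, sum_mulVec, smul_mulVec, vecMulVec_mulVec, sum_dotProduct,
    inputVec_dotProduct, mulVec_diagonal, inputVec_apply_inl, stateWeight, Finset.sum_apply,
    ite_and, Finset.sum_add_distrib, mul_add]

theorem hessian_mulVec_inr (D : DSMData M N) (ρ : Fin N → ℝ) (z : Dec M N) (v : Fin M)
    (p : Fin (N + 1) × Fin 2) :
    (hessian D ρ *ᵥ z) (v, Sum.inr p) = 2 * stateWeight D (v, Sum.inr p) * z (v, Sum.inr p) := by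
  simp [hessian, add_mulVec, sum_mulVec, smul_mulVec, vecMulVec_mulVec, sum_dotProduct,
    inputVec_dotProduct, mulVec_diagonal, inputVec_apply_inr, Finset.sum_apply]

section PartialDerivatives

variable (D : DSMData M N) (z : Dec M N) (i : Fin M × DecIdx N)

theorem hasDerivAt_load_update (w : Fin M) (k : Fin N) :
    HasDerivAt (fun t => load D (WithLp.toLp 2 (Function.update z i t)) w k)
      (inputVec w k i) (z i) := by
  simp only [load, eIn, sIn]
  exact ((hasDerivAt_update_apply _ i _).add (hasDerivAt_update_apply _ i _)).sub_const _

theorem hasDerivAt_Lagg_update (k : Fin N) :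
    HasDerivAt (fun t => Lagg D (WithLp.toLp 2 (Function.update z i t)) k)
      (∑ w, inputVec w k i) (z i) :=
  (HasDerivAt.fun_sum fun w _ => hasDerivAt_load_update D z i w k).add_const _

theorem hasDerivAt_J_update (w : Fin M) :
    HasDerivAt (fun t => J D w (WithLp.toLp 2 (Function.update z i t)))
      (∑ k, (D.ρ1 w k * (∑ u, inputVec u k i) * load D z w k
        + (D.ρ1 w k * Lagg D z k + D.ρ2 w k) * inputVec w k i
        + D.γ1 w k * (2 * ζSt z w k.castSucc
            * (Pi.single (w, Sum.inr (k.castSucc, 0)) 1 : Fin M × DecIdx N → ℝ) i)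
        + D.γ2 w k * (2 * qSt z w k.castSucc
            * (Pi.single (w, Sum.inr (k.castSucc, 1)) 1 : Fin M × DecIdx N → ℝ) i)))
      (z i) := by
  refine HasDerivAt.fun_sum fun k _ => ?_
  have hload := hasDerivAt_load_update D z i w k
  have hLagg := hasDerivAt_Lagg_update D z i k
  have hζ := hasDerivAt_update_apply (⇑z) i (w, Sum.inr (k.castSucc, 0))
  have hq := hasDerivAt_update_apply (⇑z) i (w, Sum.inr (k.castSucc, 1))
  refine (((((hLagg.const_mul (D.ρ1 w k)).add_const (D.ρ2 w k)).fun_mul hload).fun_add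
    ((hζ.pow 2).const_mul (D.γ1 w k))).fun_add ((hq.pow 2).const_mul (D.γ2 w k))).congr_deriv ?_
  simp [ζSt, qSt]

end PartialDerivatives

theorem F_apply_inl (D : DSMData M N) (z : Dec M N) (v : Fin M) (k : Fin N) (c : Fin 2) :
    F D z (v, Sum.inl (k, c)) = D.ρ1 v k * (load D z v k + Lagg D z k) + D.ρ2 v k := by
  rw [F, PiLp.toLp_apply, (hasDerivAt_J_update D z _ v).deriv]
  simp [inputVec_apply_inl, ite_and, Finset.sum_add_distrib]
  ring

theorem F_apply_inr (D : DSMData M N) (z : Dec M N) (v : Fin M) (p : Fin (N + 1) × Fin 2) :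
    F D z (v, Sum.inr p) = 2 * stateWeight D (v, Sum.inr p) * z (v, Sum.inr p) := by
  rw [F, PiLp.toLp_apply, (hasDerivAt_J_update D z _ v).deriv]
  obtain ⟨j, c⟩ := p
  induction j using Fin.lastCases with
  | last => simp [inputVec_apply_inr, stateWeight]
  | cast k =>
    fin_cases c <;> simp [inputVec_apply_inr, stateWeight, Pi.single_apply, ζSt, qSt] <;> ring

end DSM

theorem pseudogradient_affine_psd_general
    {M N : ℕ} (hM : 1 ≤ M) (D : DSMData M N)
    (hsym : SymmetricPricing D) :
    ∃ H : Matrix (Fin M × DecIdx N) (Fin M × DecIdx N) ℝ,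
      H.IsSymm ∧ H.PosSemidef ∧
      ∃ f : Dec M N, ∀ z : Dec M N,
        F D z = (WithLp.toLp 2 (fun i => (∑ j, H i j * z j) + f i) : Dec M N) := by
  set ρ := D.ρ1 ⟨0, hM⟩
  have hρ : ∀ v k, D.ρ1 v k = ρ k := fun v k => (hsym v _ k).1
  have hH : (hessian D ρ).PosSemidef := hessian_posSemidef D fun k => (D.hρ1 _ k).le
  refine ⟨hessian D ρ, Matrix.isHermitian_iff_isSymm.1 hH.isHermitian, hH, F D 0, fun z => ?_⟩
  ext ⟨v, ⟨k, c⟩ | p⟩ <;> change F D z _ = (hessian D ρ).mulVec z _ + F D 0 _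
  · rw [F_apply_inl, F_apply_inl, hessian_mulVec_inl, hρ]
    simp [load, Lagg, eIn, sIn, Finset.sum_add_distrib]
    ring
  · simp [F_apply_inr, hessian_mulVec_inr]

/-- Under symmetric pricing, the pseudo-gradient of the DSM game is an
affine map with symmetric positive semidefinite linear part: `F(z) = H z + f` with
`H` symmetric positive semidefinite. -/
theorem pseudogradient_affine_psd
    {M N : ℕ} (hM : 1 ≤ M) (hN : 1 ≤ N) (D : DSMData M N)
    (hsym : SymmetricPricing D) :
    ∃ H : Matrix (Fin M × DecIdx N) (Fin M × DecIdx N) ℝ,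
      H.IsSymm ∧ H.PosSemidef ∧
      ∃ f : Dec M N, ∀ z : Dec M N,
        F D z = (WithLp.toLp 2 (fun i => (∑ j, H i j * z j) + f i) : Dec M N) :=
  pseudogradient_affine_psd_general hM D hsym
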